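/- Let R = ℤ₂-hat, the ring of 2-adic integers. Then every A ∈ M₂(R) with tr(A) a unit is strongly rad-clean. -/

import Mathlib

/-- `j` lies in the Jacobson radical of the corner ring `eSe` (with identity `e`):
every element of the form `e - (eye)·j` is invertible in the corner ring. -/
def MemCornerJacobson {S : Type*} [Ring S] (e j : S) : Prop :=
  ∀ y : S, ∃ s : S,
    e * s * e = s ∧ s * (e - e * y * e * j) = e ∧ (e - e * y * e * j) * s = e

/-- `a` is strongly rad-clean: `a = e + u` with `e` idempotent, `u` a unit,
`ae = ea` and `eae ∈ J(eSe)`. -/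
def IsStronglyRadClean {S : Type*} [Ring S] (a : S) : Prop :=
  ∃ e : S, IsIdempotentElem e ∧ IsUnit (a - e) ∧ a * e = e * a ∧
    MemCornerJacobson e (e * a * e)

/-!
If `det A` is a unit, `A` itself is a unit and `e = 0` works. Otherwise the characteristic
polynomial `X² - tX + d` reduces to `X(X - t)` modulo the maximal ideal, with the simple root `0`;
by Hensel's lemma it factors as `(X - α)(X - β)` with `α` in the maximal ideal and `β = t - α` a
unit. Cayley–Hamilton gives `(A - α)(A - β) = 0`, and since `β - α` is a unit the spectral
projection `e = (β - α)⁻¹ (β - A)` is an idempotent commuting with `A`, on whose image `A` acts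
as `α`. Thus `A - e` acts as the unit `α - 1` on `eS` and as the unit `β` on `(1 - e)S`, and
`eAe = αe` lies in the radical of the corner ring because `α` does.
-/

open Polynomial IsLocalRing

section Ring

variable {S : Type*} [Ring S]

theorem memCornerJacobson_of_isUnit_one_sub_mul {e j : S} (he : IsIdempotentElem e)
    (hj : j * e = j) (hunit : ∀ x, IsUnit (1 - x * j)) : MemCornerJacobson e j := by
  intro y
  obtain ⟨u, hu⟩ := hunit (e * y * e)
  have hez : e * (e * y * e * j) = e * y * e * j := by simp only [← mul_assoc, he.eq]
  have hze : e * y * e * j * e = e * y * e * j := by rw [mul_assoc _ j, hj]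
  have heu : e * u = e - e * y * e * j := by rw [hu, mul_sub, mul_one, hez]
  have hcomm : Commute e u := by
    rw [Commute, SemiconjBy, heu, hu, sub_mul, one_mul, hze]
  have hcomm' : Commute e ↑u⁻¹ := hcomm.units_inv_right
  refine ⟨e * ↑u⁻¹, ?_, ?_, ?_⟩
  · rw [← mul_assoc e e, he.eq, mul_assoc, ← hcomm'.eq, ← mul_assoc, he.eq]
  · rw [← heu, mul_assoc, ← mul_assoc (↑u⁻¹ : S), ← hcomm'.eq, mul_assoc, ← mul_assoc e, he.eq,
      Units.inv_mul, mul_one]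
  · rw [← heu, mul_assoc, ← mul_assoc (u : S), ← hcomm.eq, mul_assoc, ← mul_assoc e, he.eq,
      Units.mul_inv, mul_one]

theorem isStronglyRadClean_of_isUnit {a : S} (ha : IsUnit a) : IsStronglyRadClean a :=
  ⟨0, .zero, by simpa using ha, by simp, fun _ => ⟨0, by simp, by simp, by simp⟩⟩

end Ring

section Algebra

variable {R S : Type*} [CommRing R] [Ring S] [Algebra R S]

theorem isUnit_smul_add_smul_one_sub {e : S} (he : IsIdempotentElem e) {a b : R}
    (ha : IsUnit a) (hb : IsUnit b) : IsUnit (a • e + b • (1 - e)) := by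
  obtain ⟨a', ha'⟩ := ha.exists_left_inv
  obtain ⟨b', hb'⟩ := hb.exists_left_inv
  have hf : IsIdempotentElem (1 - e) := he.one_sub
  have hef : e * (1 - e) = 0 := by rw [mul_sub, mul_one, he.eq, sub_self]
  have hfe : (1 - e) * e = 0 := by rw [sub_mul, one_mul, he.eq, sub_self]
  refine ⟨⟨_, a' • e + b' • (1 - e), ?_, ?_⟩, rfl⟩ <;>
  · simp only [add_mul, mul_add, smul_mul_smul_comm, he.eq, hf.eq, hef, hfe, smul_zero,
      add_zero, zero_add, ha', hb', mul_comm a a', mul_comm b b', one_smul]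
    abel

theorem isStronglyRadClean_of_sub_mul_sub_eq_zero {A : S} {α β : R}
    (hA : (A - algebraMap R S α) * (A - algebraMap R S β) = 0) (hβα : IsUnit (β - α))
    (hα : IsUnit (α - 1)) (hβ : IsUnit β) (hαJ : ∀ x : S, IsUnit (1 - α • x)) :
    IsStronglyRadClean A := by
  obtain ⟨γ, hγ⟩ := hβα.exists_left_inv
  set B := algebraMap R S β - A with hB
  have hAB : A * B = α • B := by
    rw [Algebra.smul_def, ← sub_eq_zero, ← sub_mul, hB, ← neg_sub A, mul_neg, hA, neg_zero]
  have hBA : B * A = α • B :=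
    ((Algebra.commute_algebraMap_left β A).sub_left (Commute.refl A)).eq.trans hAB
  have hBB : B * B = (β - α) • B := by
    calc B * B = (algebraMap R S β - A) * B := rfl
      _ = (β - α) • B := by rw [sub_mul, ← Algebra.smul_def, hAB, sub_smul]
  set e := γ • B
  have he : IsIdempotentElem e := by
    rw [IsIdempotentElem, smul_mul_smul_comm, hBB, smul_smul, mul_assoc, hγ, mul_one]
  have hAe : A * e = α • e := by rw [mul_smul_comm, hAB, smul_comm]
  have heA : e * A = α • e := by rw [smul_mul_assoc, hBA, smul_comm]
  have hBe : (β - α) • e = B := by rw [smul_smul, mul_comm, hγ, one_smul]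
  have hAsub : A - e = (α - 1) • e + β • (1 - e) := by
    rw [show A = β • 1 - (β - α) • e by rw [hBe, hB, Algebra.algebraMap_eq_smul_one]; abel]
    module
  refine ⟨e, he, hAsub ▸ isUnit_smul_add_smul_one_sub he hα hβ, hAe.trans heA.symm, ?_⟩
  rw [heA, smul_mul_assoc, he.eq]
  refine memCornerJacobson_of_isUnit_one_sub_mul he (by rw [smul_mul_assoc, he.eq]) fun x => ?_
  rw [mul_smul_comm]
  exact hαJ _

end Algebra

theorem isUnit_sub_of_mem_maximalIdeal {R : Type*} [CommRing R] [IsLocalRing R] {t x : R}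
    (ht : IsUnit t) (hx : x ∈ maximalIdeal R) : IsUnit (t - x) := by
  refine IsUnit.of_map (residue R) _ ?_
  rw [map_sub, (residue_eq_zero_iff x).mpr hx, sub_zero]
  exact ht.map _

theorem Matrix.isUnit_one_sub_smul {n R : Type*} [Fintype n] [DecidableEq n] [CommRing R]
    [IsLocalRing R] {α : R} (hα : α ∈ maximalIdeal R) (M : Matrix n n R) :
    IsUnit (1 - α • M) := by
  rw [Matrix.isUnit_iff_isUnit_det]
  refine IsUnit.of_map (residue R) _ ?_
  rw [RingHom.map_det, map_sub, map_one, RingHom.mapMatrix_apply,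
    Matrix.map_smul' _ _ _ (map_mul _), (residue_eq_zero_iff α).mpr hα, zero_smul, sub_zero,
    Matrix.det_one]
  exact isUnit_one

theorem exists_mem_maximalIdeal_mul_sub_eq {R : Type*} [CommRing R] [IsLocalRing R]
    [HenselianRing R (maximalIdeal R)] {t d : R} (ht : IsUnit t) (hd : d ∈ maximalIdeal R) :
    ∃ α ∈ maximalIdeal R, α * (t - α) = d := by
  obtain ⟨α, hroot, hα⟩ := HenselianRing.is_henselian (I := maximalIdeal R)
    (X ^ 2 - C t * X + C d) (by monicity!) 0 (by simpa using hd)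
    (by simpa using ht.neg.map (Ideal.Quotient.mk (maximalIdeal R)))
  refine ⟨α, by simpa using hα, ?_⟩
  simp only [IsRoot, eval_add, eval_sub, eval_pow, eval_mul, eval_C, eval_X] at hroot
  linear_combination -hroot

theorem Matrix.isStronglyRadClean_of_isUnit_trace {R : Type*} [CommRing R] [IsLocalRing R]
    [HenselianRing R (maximalIdeal R)] (A : Matrix (Fin 2) (Fin 2) R) (h : IsUnit A.trace) :
    IsStronglyRadClean A := by
  by_cases hd : IsUnit A.det
  · exact isStronglyRadClean_of_isUnit ((Matrix.isUnit_iff_isUnit_det A).mpr hd)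
  obtain ⟨α, hα, hαβ⟩ := exists_mem_maximalIdeal_mul_sub_eq h ((mem_maximalIdeal _).mpr hd)
  have hcharpoly : A.charpoly = (X - C α) * (X - C (A.trace - α)) := by
    rw [charpoly_fin_two, ← hαβ, C_mul, C_sub]
    ring
  have hA := A.aeval_self_charpoly
  rw [hcharpoly, map_mul, map_sub, map_sub, aeval_X, aeval_C, aeval_C] at hA
  refine isStronglyRadClean_of_sub_mul_sub_eq_zero hA ?_ ?_ ?_ (isUnit_one_sub_smul hα)
  · rw [sub_sub, ← two_mul]
    exact isUnit_sub_of_mem_maximalIdeal h (Ideal.mul_mem_left _ _ hα)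
  · simpa using (isUnit_sub_of_mem_maximalIdeal isUnit_one hα).neg
  · exact isUnit_sub_of_mem_maximalIdeal h hα

theorem stmt14 (A : Matrix (Fin 2) (Fin 2) ℤ_[2]) (h : IsUnit A.trace) :
    IsStronglyRadClean A :=
  A.isStronglyRadClean_of_isUnit_trace h
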